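/- Let (X, Y, W, Z) be a centered (jointly) Gaussian random vector in ℝ⁴. Then E( ( W − E(W·exp(X − E(X²)/2)) ) · ( Z − E(Z·exp(Y − E(Y²)/2)) ) · exp(X − E(X²)/2) · exp(Y − E(Y²)/2) ) = ( E(WY)·E(ZX) + E(WZ) ) · exp(E(XY)). -/

import Mathlib

noncomputable section

open MeasureTheory ProbabilityTheory NNReal

/-- `(X, Y, W, Z)` is a centered (jointly) Gaussian vector: every linear combination of its
coordinates is a centered real Gaussian. -/
def IsCenteredGaussianQuadruple {Ω : Type*} [MeasurableSpace Ω] (P : Measure Ω)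
    (X Y W Z : Ω → ℝ) : Prop :=
  ∀ a b c d : ℝ, ∃ v : ℝ≥0,
    Measure.map (fun ω => a * X ω + b * Y ω + c * W ω + d * Z ω) P = gaussianReal 0 v

section Auxiliary

open Real Metric
open scoped ENNReal

namespace Statement17Aux

/-! ### Moments of the real Gaussian measure -/

lemma pdf_mul_exp (v : ℝ≥0) (hv : v ≠ 0) (t x : ℝ) :
    gaussianPDFReal 0 v x * rexp (t * x) = rexp (t ^ 2 * v / 2) * gaussianPDFReal (t * v) v x := by
  have hv' : (v : ℝ) ≠ 0 := by exact_mod_cast hv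
  have hv2 : (0:ℝ) < 2 * (v:ℝ) := by positivity
  simp only [gaussianPDFReal]
  rw [mul_assoc, ← Real.exp_add]
  rw [show rexp (t ^ 2 * v / 2) * ((√(2*π*v))⁻¹ * rexp (-(x - t*v)^2/(2*v)))
      = (√(2*π*v))⁻¹ * rexp (t^2*v/2 + -(x - t*v)^2/(2*v)) by rw [Real.exp_add]; ring]
  congr 1
  field_simp
  ring

lemma integrable_exp_mul_gaussianReal (v : ℝ≥0) (t : ℝ) :
    Integrable (fun x => rexp (t * x)) (gaussianReal 0 v) := by
  by_cases hv : v = 0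
  · subst hv
    rw [gaussianReal_zero_var]
    refine ⟨(Real.continuous_exp.comp (continuous_const.mul continuous_id)).aestronglyMeasurable, ?_⟩
    rw [HasFiniteIntegral, lintegral_dirac]
    exact ENNReal.coe_lt_top
  rw [gaussianReal_of_var_ne_zero _ hv]
  have hpdf : gaussianPDF 0 v = fun x => ((Real.toNNReal (gaussianPDFReal 0 v x) : ℝ≥0) : ℝ≥0∞) := by
    funext x; rfl
  rw [hpdf, integrable_withDensity_iff_integrable_smul
    ((measurable_gaussianPDFReal 0 v).real_toNNReal)]
  refine Integrable.congr ((integrable_gaussianPDFReal (t*v) v).const_mul (rexp (t^2*v/2))) ?_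
  refine Filter.Eventually.of_forall fun x => ?_
  show rexp (t^2*v/2) * gaussianPDFReal (t*v) v x = _ • rexp (t * x)
  rw [NNReal.smul_def, smul_eq_mul, Real.coe_toNNReal _ (gaussianPDFReal_nonneg _ _ _),
    ← pdf_mul_exp v hv]

lemma integral_exp_mul_gaussianReal (v : ℝ≥0) (t : ℝ) :
    ∫ x, rexp (t * x) ∂(gaussianReal 0 v) = rexp (t ^ 2 * v / 2) := by
  by_cases hv : v = 0
  · subst hv; simp
  rw [gaussianReal_of_var_ne_zero _ hv]
  have hpdf : gaussianPDF 0 v = fun x => ((Real.toNNReal (gaussianPDFReal 0 v x) : ℝ≥0) : ℝ≥0∞) := by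
    funext x; rfl
  rw [hpdf, integral_withDensity_eq_integral_smul ((measurable_gaussianPDFReal 0 v).real_toNNReal)]
  have h : ∀ x : ℝ, (Real.toNNReal (gaussianPDFReal 0 v x)) • rexp (t * x)
      = rexp (t^2*v/2) * gaussianPDFReal (t*v) v x := by
    intro x
    rw [NNReal.smul_def, smul_eq_mul, Real.coe_toNNReal _ (gaussianPDFReal_nonneg _ _ _),
      ← pdf_mul_exp v hv]
  simp_rw [h]
  rw [integral_const_mul, integral_gaussianPDFReal_eq_one _ hv, mul_one]

/-! ### Differentiation under the integral sign -/

variable {Ω : Type*} [MeasurableSpace Ω] {P : Measure Ω}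

lemma abs_mul_exp_le' (a u : ℝ) (ha : |a| ≤ 1) :
    |u| * rexp (a * u) ≤ rexp (2 * u) + rexp (-(2 * u)) := by
  have h1 : |u| * rexp (a * u) ≤ |u| * rexp |u| := by
    refine mul_le_mul_of_nonneg_left (Real.exp_le_exp.mpr ?_) (abs_nonneg u)
    calc a * u ≤ |a * u| := le_abs_self _
      _ = |a| * |u| := abs_mul _ _
      _ ≤ 1 * |u| := mul_le_mul_of_nonneg_right ha (abs_nonneg u)
      _ = |u| := one_mul _
  have h2 : |u| * rexp |u| ≤ rexp |u| * rexp |u| :=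
    mul_le_mul_of_nonneg_right ((le_add_of_nonneg_left zero_le_one).trans
      (by simpa [add_comm] using Real.add_one_le_exp |u|)) (Real.exp_pos _).le
  have h3 : rexp |u| * rexp |u| = rexp (2 * |u|) := by rw [← Real.exp_add]; ring_nf
  have h4 : rexp (2 * |u|) ≤ rexp (2 * u) + rexp (-(2 * u)) := by
    rcases abs_cases u with ⟨h, _⟩ | ⟨h, _⟩
    · rw [h]; exact le_add_of_nonneg_right (Real.exp_pos _).le
    · rw [h, mul_neg, ← neg_mul]
      exact le_add_of_nonneg_left (Real.exp_pos _).le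
  linarith

lemma deriv_step {h g T : Ω → ℝ} (hh : AEMeasurable h P) (hg : AEMeasurable g P)
    (hT : AEMeasurable T P)
    (hint : ∀ s : ℝ, Integrable (fun ω => h ω * rexp (g ω + s * T ω)) P) (t₀ : ℝ) :
    Integrable (fun ω => h ω * T ω * rexp (g ω + t₀ * T ω)) P ∧
    HasDerivAt (fun t => ∫ ω, h ω * rexp (g ω + t * T ω) ∂P)
      (∫ ω, h ω * T ω * rexp (g ω + t₀ * T ω) ∂P) t₀ := by
  have hexp : ∀ t : ℝ, AEMeasurable (fun ω => rexp (g ω + t * T ω)) P := fun t =>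
    Real.measurable_exp.comp_aemeasurable (hg.add (hT.const_mul t))
  have habs : ∀ s : ℝ, Integrable (fun ω => |h ω| * rexp (g ω + s * T ω)) P := by
    intro s
    refine (hint s).abs.congr (Filter.Eventually.of_forall fun ω => ?_)
    simp [abs_mul, abs_of_pos (Real.exp_pos _)]
  refine hasDerivAt_integral_of_dominated_loc_of_deriv_le (F := fun t ω => h ω * rexp (g ω + t * T ω))
    (F' := fun t ω => h ω * T ω * rexp (g ω + t * T ω))
    (bound := fun ω => |h ω| * rexp (g ω + (t₀ + 2) * T ω) + |h ω| * rexp (g ω + (t₀ - 2) * T ω))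
    (ball_mem_nhds t₀ one_pos) (Filter.Eventually.of_forall fun t => (hh.mul (hexp t)).aestronglyMeasurable)
    (hint t₀) ((hh.mul hT).mul (hexp t₀) |>.aestronglyMeasurable)
    (Filter.Eventually.of_forall fun ω => ?_) ((habs _).add (habs _))
    (Filter.Eventually.of_forall fun ω => ?_)
  · intro t ht
    have key : |T ω| * rexp (g ω + t * T ω)
        ≤ rexp (g ω + (t₀ + 2) * T ω) + rexp (g ω + (t₀ - 2) * T ω) := by
      have hsplit : rexp (g ω + t * T ω)
          = rexp ((t - t₀) * T ω) * rexp (g ω + t₀ * T ω) := by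
        rw [← Real.exp_add]; ring_nf
      have h1 := abs_mul_exp_le' (t - t₀) (T ω) (by
        rw [mem_ball, Real.dist_eq] at ht; exact (le_of_lt ht))
      calc |T ω| * rexp (g ω + t * T ω)
          = (|T ω| * rexp ((t - t₀) * T ω)) * rexp (g ω + t₀ * T ω) := by
            rw [hsplit]; ring
        _ ≤ (rexp (2 * T ω) + rexp (-(2 * T ω))) * rexp (g ω + t₀ * T ω) :=
            mul_le_mul_of_nonneg_right h1 (Real.exp_pos _).le
        _ = rexp (g ω + (t₀ + 2) * T ω) + rexp (g ω + (t₀ - 2) * T ω) := by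
            rw [add_mul, ← Real.exp_add, ← Real.exp_add]; ring_nf
    calc ‖h ω * T ω * rexp (g ω + t * T ω)‖
        = |h ω| * (|T ω| * rexp (g ω + t * T ω)) := by
          simp [abs_mul, abs_of_pos (Real.exp_pos _), mul_assoc]
      _ ≤ |h ω| * (rexp (g ω + (t₀ + 2) * T ω) + rexp (g ω + (t₀ - 2) * T ω)) :=
          mul_le_mul_of_nonneg_left key (abs_nonneg _)
      _ = _ := by ring
  · intro t _
    have h1 : HasDerivAt (fun t : ℝ => g ω + t * T ω) (T ω) t :=
      (hasDerivAt_mul_const (T ω)).const_add (g ω)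
    have h2 := (h1.exp).const_mul (h ω)
    exact h2.congr_deriv (by ring)

lemma exp_family_integral_deriv {h g T : Ω → ℝ} (hh : AEMeasurable h P) (hg : AEMeasurable g P)
    (hT : AEMeasurable T P)
    (hint : ∀ s : ℝ, Integrable (fun ω => h ω * rexp (g ω + s * T ω)) P)
    {φ : ℝ → ℝ} (hval : ∀ t, ∫ ω, h ω * rexp (g ω + t * T ω) ∂P = φ t)
    {t₀ d : ℝ} (hφ : HasDerivAt φ d t₀) :
    Integrable (fun ω => h ω * T ω * rexp (g ω + t₀ * T ω)) P ∧
    ∫ ω, h ω * T ω * rexp (g ω + t₀ * T ω) ∂P = d := by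
  obtain ⟨hi, hd⟩ := deriv_step hh hg hT hint t₀
  refine ⟨hi, ?_⟩
  have heq : (fun t => ∫ ω, h ω * rexp (g ω + t * T ω) ∂P) = φ := funext hval
  rw [heq] at hd
  exact hd.unique hφ

/-! ### Transfer to the probability space -/

lemma aemeasurable_of_map_gauss {f : Ω → ℝ} {v : ℝ≥0}
    (h : Measure.map f P = gaussianReal 0 v) : AEMeasurable f P := by
  by_contra hf
  rw [Measure.map_of_not_aemeasurable hf] at h
  exact (IsProbabilityMeasure.ne_zero (gaussianReal 0 v)) h.symm

lemma map_gauss_integrable_exp {f : Ω → ℝ} {v : ℝ≥0}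
    (hmap : Measure.map f P = gaussianReal 0 v) (t : ℝ) :
    Integrable (fun ω => rexp (t * f ω)) P := by
  have hf := aemeasurable_of_map_gauss hmap
  have h1 := integrable_exp_mul_gaussianReal v t
  rw [← hmap] at h1
  exact (integrable_map_measure
    (Real.continuous_exp.comp (continuous_const.mul continuous_id)).aestronglyMeasurable hf).mp h1

lemma map_gauss_integral_exp {f : Ω → ℝ} {v : ℝ≥0}
    (hmap : Measure.map f P = gaussianReal 0 v) (t : ℝ) :
    ∫ ω, rexp (t * f ω) ∂P = rexp (t ^ 2 * v / 2) := by
  have hf := aemeasurable_of_map_gauss hmap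
  calc ∫ ω, rexp (t * f ω) ∂P = ∫ x, rexp (t * x) ∂(Measure.map f P) :=
        (integral_map hf
          (Real.continuous_exp.comp (continuous_const.mul continuous_id)).aestronglyMeasurable).symm
    _ = rexp (t ^ 2 * v / 2) := by rw [hmap, integral_exp_mul_gaussianReal]

lemma map_gauss_integrable_sq {f : Ω → ℝ} {v : ℝ≥0}
    (hmap : Measure.map f P = gaussianReal 0 v) :
    Integrable (fun ω => f ω * f ω) P := by
  have hf := aemeasurable_of_map_gauss hmap
  refine Integrable.mono' ((map_gauss_integrable_exp hmap 2).add
    (map_gauss_integrable_exp hmap (-2))) (hf.mul hf).aestronglyMeasurable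
    (Filter.Eventually.of_forall fun ω => ?_)
  set x := f ω
  have h1 : ‖x * x‖ = |x| * |x| := by rw [Real.norm_eq_abs, abs_mul]
  have h2 : |x| * |x| ≤ rexp |x| * rexp |x| := by
    have hx : |x| ≤ rexp |x| :=
      (le_add_of_nonneg_left zero_le_one).trans (by simpa [add_comm] using Real.add_one_le_exp |x|)
    exact mul_le_mul hx hx (abs_nonneg x) (Real.exp_pos _).le
  have h3 : rexp |x| * rexp |x| = rexp (2 * |x|) := by rw [← Real.exp_add]; ring_nf
  have h4 : rexp (2 * |x|) ≤ rexp (2 * x) + rexp (-2 * x) := by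
    rcases abs_cases x with ⟨h, _⟩ | ⟨h, _⟩
    · rw [h]; exact le_add_of_nonneg_right (Real.exp_pos _).le
    · rw [h, mul_neg, ← neg_mul]
      exact le_add_of_nonneg_left (Real.exp_pos _).le
  calc ‖x * x‖ = |x| * |x| := h1
    _ ≤ rexp (2*|x|) := h3 ▸ h2
    _ ≤ rexp (2*x) + rexp (-2*x) := h4

lemma map_gauss_integral_sq [IsProbabilityMeasure P] {f : Ω → ℝ} {v : ℝ≥0}
    (hmap : Measure.map f P = gaussianReal 0 v) :
    ∫ ω, f ω * f ω ∂P = v := by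
  have hf := aemeasurable_of_map_gauss hmap
  have hint1 : ∀ s : ℝ, Integrable (fun ω => (1:ℝ) * rexp ((0:ℝ) + s * f ω)) P := by
    intro s; simpa using map_gauss_integrable_exp hmap s
  have hval1 : ∀ t : ℝ, ∫ ω, (1:ℝ) * rexp ((0:ℝ) + t * f ω) ∂P = rexp (t ^ 2 * v / 2) := by
    intro t; simp only [one_mul, zero_add]; exact map_gauss_integral_exp hmap t
  have hquad : ∀ t₀ : ℝ, HasDerivAt (fun t : ℝ => t ^ 2 * (v:ℝ) / 2) (t₀ * v) t₀ := by
    intro t₀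
    have := ((hasDerivAt_pow 2 t₀).mul_const (v:ℝ)).div_const 2
    exact this.congr_deriv (by ring)
  have stage1 : ∀ t₀ : ℝ,
      Integrable (fun ω => (1:ℝ) * f ω * rexp ((0:ℝ) + t₀ * f ω)) P ∧
      ∫ ω, (1:ℝ) * f ω * rexp ((0:ℝ) + t₀ * f ω) ∂P = rexp (t₀ ^ 2 * v / 2) * (t₀ * v) := by
    intro t₀
    exact exp_family_integral_deriv aemeasurable_const aemeasurable_const hf hint1 hval1
      (hquad t₀).exp
  have hint2 : ∀ s : ℝ, Integrable (fun ω => f ω * rexp ((0:ℝ) + s * f ω)) P := by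
    intro s; simpa using (stage1 s).1
  have hval2 : ∀ t : ℝ, ∫ ω, f ω * rexp ((0:ℝ) + t * f ω) ∂P
      = rexp (t ^ 2 * v / 2) * (t * v) := by
    intro t
    have := (stage1 t).2
    simpa using this
  have hψ : HasDerivAt (fun t : ℝ => rexp (t ^ 2 * v / 2) * (t * v)) (v : ℝ) 0 := by
    have := ((hquad 0).exp.mul (hasDerivAt_mul_const (v:ℝ)))
    exact this.congr_deriv (by simp)
  have final := exp_family_integral_deriv hf aemeasurable_const hf hint2 hval2 hψ
  have := final.2
  simpa using this

/-! ### Derivative helpers for explicit functions -/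

lemma hasDerivAt_exp_quadratic (p q r : ℝ) :
    HasDerivAt (fun t : ℝ => rexp (p + q * t + r * t ^ 2)) (rexp p * q) 0 := by
  have ha : HasDerivAt (fun t : ℝ => q * t) (q * 1) 0 := (hasDerivAt_id 0).const_mul q
  have hb : HasDerivAt (fun t : ℝ => r * t ^ 2) (r * (↑2 * 0 ^ (2-1))) 0 :=
    (hasDerivAt_pow 2 (0:ℝ)).const_mul r
  have h1 : HasDerivAt (fun t : ℝ => p + q * t + r * t ^ 2) q 0 := by
    have := ((hasDerivAt_const (0:ℝ) p).add ha).add hb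
    exact this.congr_deriv (by norm_num)
  have h2 := h1.exp
  convert h2 using 1
  norm_num

lemma hasDerivAt_linmul_exp_quadratic (b f p q r : ℝ) :
    HasDerivAt (fun t : ℝ => (b + t * f) * rexp (p + q * t + r * t ^ 2))
      (f * rexp p + b * (rexp p * q)) 0 := by
  have hlin : HasDerivAt (fun t : ℝ => b + t * f) f 0 := (hasDerivAt_mul_const f).const_add b
  have hexp := hasDerivAt_exp_quadratic p q r
  have := hlin.mul hexp
  exact this.congr_deriv (by norm_num)

lemma integrable_mul_of_sq {f g : Ω → ℝ}
    (hf : Integrable (fun ω => f ω * f ω) P) (hg : Integrable (fun ω => g ω * g ω) P)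
    (hfg : Integrable (fun ω => (f ω + g ω) * (f ω + g ω)) P) :
    Integrable (fun ω => f ω * g ω) P := by
  have e : (fun ω => f ω * g ω)
      = fun ω => ((f ω + g ω) * (f ω + g ω) - f ω * f ω - g ω * g ω) / 2 := by
    funext ω; ring
  rw [e]
  exact ((hfg.sub hf).sub hg).div_const 2

end Statement17Aux

end Auxiliary

/-- Gaussian identity: for a centered Gaussian vector `(X, Y, W, Z)`,
`E((W − E(W e^{X−E(X²)/2}))(Z − E(Z e^{Y−E(Y²)/2})) e^{X−E(X²)/2} e^{Y−E(Y²)/2})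
  = (E(WY)E(ZX) + E(WZ)) e^{E(XY)}`. -/
theorem statement17 {Ω : Type*} [MeasurableSpace Ω] (P : Measure Ω) [IsProbabilityMeasure P]
    (X Y W Z : Ω → ℝ) (hGauss : IsCenteredGaussianQuadruple P X Y W Z) :
    ∫ ω, (W ω - ∫ ω', W ω' * Real.exp (X ω' - (∫ ω'', (X ω'') ^ 2 ∂P) / 2) ∂P) *
          (Z ω - ∫ ω', Z ω' * Real.exp (Y ω' - (∫ ω'', (Y ω'') ^ 2 ∂P) / 2) ∂P) *
          Real.exp (X ω - (∫ ω', (X ω') ^ 2 ∂P) / 2) *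
          Real.exp (Y ω - (∫ ω', (Y ω') ^ 2 ∂P) / 2) ∂P =
      ((∫ ω, W ω * Y ω ∂P) * (∫ ω, Z ω * X ω ∂P) + ∫ ω, W ω * Z ω ∂P) *
        Real.exp (∫ ω, X ω * Y ω ∂P) := by
  classical
  have gm : ∀ a b c d : ℝ, Measure.map (fun ω => a * X ω + b * Y ω + c * W ω + d * Z ω) P
      = gaussianReal 0 (hGauss a b c d).choose := fun a b c d => (hGauss a b c d).choose_spec
  -- measurability of the coordinates
  have hXm : AEMeasurable X P := by
    have h : AEMeasurable (fun ω => (1:ℝ) * X ω + 0 * Y ω + 0 * W ω + 0 * Z ω) P :=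
      Statement17Aux.aemeasurable_of_map_gauss (gm 1 0 0 0)
    have e : (fun ω => (1:ℝ) * X ω + 0 * Y ω + 0 * W ω + 0 * Z ω) = X := by funext ω; ring
    rwa [e] at h
  have hYm : AEMeasurable Y P := by
    have h : AEMeasurable (fun ω => (0:ℝ) * X ω + 1 * Y ω + 0 * W ω + 0 * Z ω) P :=
      Statement17Aux.aemeasurable_of_map_gauss (gm 0 1 0 0)
    have e : (fun ω => (0:ℝ) * X ω + 1 * Y ω + 0 * W ω + 0 * Z ω) = Y := by funext ω; ring
    rwa [e] at h
  have hWm : AEMeasurable W P := by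
    have h : AEMeasurable (fun ω => (0:ℝ) * X ω + 0 * Y ω + 1 * W ω + 0 * Z ω) P :=
      Statement17Aux.aemeasurable_of_map_gauss (gm 0 0 1 0)
    have e : (fun ω => (0:ℝ) * X ω + 0 * Y ω + 1 * W ω + 0 * Z ω) = W := by funext ω; ring
    rwa [e] at h
  have hZm : AEMeasurable Z P := by
    have h : AEMeasurable (fun ω => (0:ℝ) * X ω + 0 * Y ω + 0 * W ω + 1 * Z ω) P :=
      Statement17Aux.aemeasurable_of_map_gauss (gm 0 0 0 1)
    have e : (fun ω => (0:ℝ) * X ω + 0 * Y ω + 0 * W ω + 1 * Z ω) = Z := by funext ω; ring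
    rwa [e] at h
  -- integrability of squares and products
  have isq : ∀ a b c d : ℝ, Integrable
      (fun ω => (a*X ω + b*Y ω + c*W ω + d*Z ω) * (a*X ω + b*Y ω + c*W ω + d*Z ω)) P :=
    fun a b c d => Statement17Aux.map_gauss_integrable_sq (gm a b c d)
  have iXX : Integrable (fun ω => X ω * X ω) P :=
    (isq 1 0 0 0).congr (Filter.Eventually.of_forall fun ω => by ring)
  have iYY : Integrable (fun ω => Y ω * Y ω) P :=
    (isq 0 1 0 0).congr (Filter.Eventually.of_forall fun ω => by ring)
  have iWW : Integrable (fun ω => W ω * W ω) P :=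
    (isq 0 0 1 0).congr (Filter.Eventually.of_forall fun ω => by ring)
  have iZZ : Integrable (fun ω => Z ω * Z ω) P :=
    (isq 0 0 0 1).congr (Filter.Eventually.of_forall fun ω => by ring)
  have iXY : Integrable (fun ω => X ω * Y ω) P :=
    Statement17Aux.integrable_mul_of_sq iXX iYY
      ((isq 1 1 0 0).congr (Filter.Eventually.of_forall fun ω => by ring))
  have iXW : Integrable (fun ω => X ω * W ω) P :=
    Statement17Aux.integrable_mul_of_sq iXX iWW
      ((isq 1 0 1 0).congr (Filter.Eventually.of_forall fun ω => by ring))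
  have iXZ : Integrable (fun ω => X ω * Z ω) P :=
    Statement17Aux.integrable_mul_of_sq iXX iZZ
      ((isq 1 0 0 1).congr (Filter.Eventually.of_forall fun ω => by ring))
  have iYW : Integrable (fun ω => Y ω * W ω) P :=
    Statement17Aux.integrable_mul_of_sq iYY iWW
      ((isq 0 1 1 0).congr (Filter.Eventually.of_forall fun ω => by ring))
  have iYZ : Integrable (fun ω => Y ω * Z ω) P :=
    Statement17Aux.integrable_mul_of_sq iYY iZZ
      ((isq 0 1 0 1).congr (Filter.Eventually.of_forall fun ω => by ring))
  have iWZ : Integrable (fun ω => W ω * Z ω) P :=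
    Statement17Aux.integrable_mul_of_sq iWW iZZ
      ((isq 0 0 1 1).congr (Filter.Eventually.of_forall fun ω => by ring))
  have iZX : Integrable (fun ω => Z ω * X ω) P :=
    iXZ.congr (Filter.Eventually.of_forall fun ω => mul_comm _ _)
  have iWY : Integrable (fun ω => W ω * Y ω) P :=
    iYW.congr (Filter.Eventually.of_forall fun ω => mul_comm _ _)
  -- the covariances
  set cXX := ∫ ω, X ω * X ω ∂P with hcXX
  set cYY := ∫ ω, Y ω * Y ω ∂P with hcYY
  set cWW := ∫ ω, W ω * W ω ∂P with hcWW
  set cZZ := ∫ ω, Z ω * Z ω ∂P with hcZZ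
  set cXY := ∫ ω, X ω * Y ω ∂P with hcXY
  set cXW := ∫ ω, X ω * W ω ∂P with hcXW
  set cZX := ∫ ω, Z ω * X ω ∂P with hcZX
  set cWY := ∫ ω, W ω * Y ω ∂P with hcWY
  set cYZ := ∫ ω, Y ω * Z ω ∂P with hcYZ
  set cWZ := ∫ ω, W ω * Z ω ∂P with hcWZ
  -- variance of a general linear combination
  have quad : ∀ a b c d : ℝ,
      ∫ ω, (a*X ω + b*Y ω + c*W ω + d*Z ω) * (a*X ω + b*Y ω + c*W ω + d*Z ω) ∂P
      = a^2*cXX + b^2*cYY + c^2*cWW + d^2*cZZ + 2*a*b*cXY + 2*a*c*cXW + 2*a*d*cZX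
        + 2*b*c*cWY + 2*b*d*cYZ + 2*c*d*cWZ := by
    intro a b c d
    have i1 := iXX.const_mul (a^2)
    have i2 := iYY.const_mul (b^2)
    have i3 := iWW.const_mul (c^2)
    have i4 := iZZ.const_mul (d^2)
    have i5 := iXY.const_mul (2*a*b)
    have i6 := iXW.const_mul (2*a*c)
    have i7 := iZX.const_mul (2*a*d)
    have i8 := iWY.const_mul (2*b*c)
    have i9 := iYZ.const_mul (2*b*d)
    have i10 := iWZ.const_mul (2*c*d)
    have e : (fun ω => (a*X ω + b*Y ω + c*W ω + d*Z ω) * (a*X ω + b*Y ω + c*W ω + d*Z ω))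
        = fun ω => a^2*(X ω*X ω) + b^2*(Y ω*Y ω) + c^2*(W ω*W ω) + d^2*(Z ω*Z ω)
          + 2*a*b*(X ω*Y ω) + 2*a*c*(X ω*W ω) + 2*a*d*(Z ω*X ω) + 2*b*c*(W ω*Y ω)
          + 2*b*d*(Y ω*Z ω) + 2*c*d*(W ω*Z ω) := by funext ω; ring
    have s2 : Integrable (fun ω => a^2*(X ω*X ω) + b^2*(Y ω*Y ω)) P := i1.add i2
    have s3 : Integrable (fun ω => a^2*(X ω*X ω) + b^2*(Y ω*Y ω) + c^2*(W ω*W ω)) P := s2.add i3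
    have s4 : Integrable (fun ω => a^2*(X ω*X ω) + b^2*(Y ω*Y ω) + c^2*(W ω*W ω) + d^2*(Z ω*Z ω)) P := s3.add i4
    have s5 : Integrable (fun ω => a^2*(X ω*X ω) + b^2*(Y ω*Y ω) + c^2*(W ω*W ω) + d^2*(Z ω*Z ω) + 2*a*b*(X ω*Y ω)) P := s4.add i5
    have s6 : Integrable (fun ω => a^2*(X ω*X ω) + b^2*(Y ω*Y ω) + c^2*(W ω*W ω) + d^2*(Z ω*Z ω) + 2*a*b*(X ω*Y ω) + 2*a*c*(X ω*W ω)) P := s5.add i6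
    have s7 : Integrable (fun ω => a^2*(X ω*X ω) + b^2*(Y ω*Y ω) + c^2*(W ω*W ω) + d^2*(Z ω*Z ω) + 2*a*b*(X ω*Y ω) + 2*a*c*(X ω*W ω) + 2*a*d*(Z ω*X ω)) P := s6.add i7
    have s8 : Integrable (fun ω => a^2*(X ω*X ω) + b^2*(Y ω*Y ω) + c^2*(W ω*W ω) + d^2*(Z ω*Z ω) + 2*a*b*(X ω*Y ω) + 2*a*c*(X ω*W ω) + 2*a*d*(Z ω*X ω) + 2*b*c*(W ω*Y ω)) P := s7.add i8
    have s9 : Integrable (fun ω => a^2*(X ω*X ω) + b^2*(Y ω*Y ω) + c^2*(W ω*W ω) + d^2*(Z ω*Z ω) + 2*a*b*(X ω*Y ω) + 2*a*c*(X ω*W ω) + 2*a*d*(Z ω*X ω) + 2*b*c*(W ω*Y ω) + 2*b*d*(Y ω*Z ω)) P := s8.add i9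
    rw [e,
      integral_add s9 i10,
      integral_add s8 i9,
      integral_add s7 i8,
      integral_add s6 i7,
      integral_add s5 i6,
      integral_add s4 i5,
      integral_add s3 i4,
      integral_add s2 i3,
      integral_add i1 i2]
    simp only [integral_const_mul]
    rfl
  -- the master mgf formula
  have key : ∀ a b c d : ℝ,
      Integrable (fun ω => Real.exp (a*X ω + b*Y ω + c*W ω + d*Z ω)) P ∧
      ∫ ω, Real.exp (a*X ω + b*Y ω + c*W ω + d*Z ω) ∂P
        = Real.exp ((a^2*cXX + b^2*cYY + c^2*cWW + d^2*cZZ + 2*a*b*cXY + 2*a*c*cXW + 2*a*d*cZX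
          + 2*b*c*cWY + 2*b*d*cYZ + 2*c*d*cWZ)/2) := by
    intro a b c d
    constructor
    · have := Statement17Aux.map_gauss_integrable_exp (gm a b c d) 1
      simpa using this
    · have h1 := Statement17Aux.map_gauss_integral_exp (gm a b c d) 1
      have h2' : ∫ ω, (a*X ω + b*Y ω + c*W ω + d*Z ω) * (a*X ω + b*Y ω + c*W ω + d*Z ω) ∂P
          = ((hGauss a b c d).choose : ℝ) := Statement17Aux.map_gauss_integral_sq (gm a b c d)
      have h2 := h2'.symm
      rw [quad a b c d] at h2
      simp only [one_mul, one_pow] at h1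
      rw [h2] at h1
      exact h1
  -- Step I : the two-parameter exponential moment
  have stepI : ∀ t s : ℝ,
      Integrable (fun ω => Real.exp (X ω + Y ω + t * W ω + s * Z ω)) P ∧
      ∫ ω, Real.exp (X ω + Y ω + t * W ω + s * Z ω) ∂P
        = Real.exp ((cXX + 2*cXY + cYY + 2*t*(cXW + cWY) + 2*s*(cZX + cYZ)
            + t^2*cWW + s^2*cZZ + 2*t*s*cWZ)/2) := by
    intro t s
    obtain ⟨h1, h2⟩ := key 1 1 t s
    have e : (fun ω => Real.exp ((1:ℝ)*X ω + 1*Y ω + t*W ω + s*Z ω))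
        = fun ω => Real.exp (X ω + Y ω + t*W ω + s*Z ω) := by
      funext ω; congr 1; ring
    rw [e] at h1 h2
    refine ⟨h1, h2.trans ?_⟩
    congr 1
    ring
  -- Step II : first derivative in the W-direction
  have stepII : ∀ s : ℝ,
      Integrable (fun ω => W ω * Real.exp (X ω + Y ω + s * Z ω)) P ∧
      ∫ ω, W ω * Real.exp (X ω + Y ω + s * Z ω) ∂P
        = ((cXW + cWY) + s * cWZ)
          * Real.exp ((cXX + 2*cXY + cYY + 2*s*(cZX + cYZ) + s^2*cZZ)/2) := by
    intro s
    have hg : AEMeasurable (fun ω => X ω + Y ω + s * Z ω) P := (hXm.add hYm).add (hZm.const_mul s)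
    have hint : ∀ u : ℝ, Integrable (fun ω => (1:ℝ) * Real.exp (X ω + Y ω + s*Z ω + u * W ω)) P := by
      intro u
      refine ((stepI u s).1).congr (Filter.Eventually.of_forall fun ω => ?_)
      simp only []
      rw [one_mul]; congr 1; ring
    have hval : ∀ u : ℝ, ∫ ω, (1:ℝ) * Real.exp (X ω + Y ω + s*Z ω + u * W ω) ∂P
        = (fun u : ℝ => Real.exp ((cXX + 2*cXY + cYY + 2*s*(cZX + cYZ) + s^2*cZZ)/2
            + ((cXW + cWY) + s*cWZ) * u + (cWW/2) * u^2)) u := by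
      intro u
      have e : ∫ ω, (1:ℝ) * Real.exp (X ω + Y ω + s*Z ω + u*W ω) ∂P
          = ∫ ω, Real.exp (X ω + Y ω + u*W ω + s*Z ω) ∂P :=
        integral_congr_ae (Filter.Eventually.of_forall fun ω => by simp only []; rw [one_mul]; congr 1; ring)
      rw [e, (stepI u s).2]
      congr 1
      ring
    obtain ⟨hi, hv⟩ := Statement17Aux.exp_family_integral_deriv (P := P)
      (h := fun _ => (1:ℝ)) (g := fun ω => X ω + Y ω + s * Z ω) (T := W)
      aemeasurable_const hg hWm hint hval
      (Statement17Aux.hasDerivAt_exp_quadratic _ _ _)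
    constructor
    · refine hi.congr (Filter.Eventually.of_forall fun ω => ?_)
      show (1:ℝ) * W ω * Real.exp (X ω + Y ω + s*Z ω + 0 * W ω) = _
      rw [one_mul, zero_mul, add_zero]
    · have e2 : ∫ ω, (1:ℝ) * W ω * Real.exp (X ω + Y ω + s*Z ω + 0 * W ω) ∂P
          = ∫ ω, W ω * Real.exp (X ω + Y ω + s*Z ω) ∂P :=
        integral_congr_ae (Filter.Eventually.of_forall fun ω => by simp only []; rw [one_mul, zero_mul, add_zero])
      exact e2.symm.trans (hv.trans (by ring))
  -- Step III : mixed second derivative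
  have stepIII :
      Integrable (fun ω => W ω * Z ω * Real.exp (X ω + Y ω)) P ∧
      ∫ ω, W ω * Z ω * Real.exp (X ω + Y ω) ∂P
        = (cWZ + (cXW + cWY) * (cZX + cYZ)) * Real.exp ((cXX + 2*cXY + cYY)/2) := by
    have hg : AEMeasurable (fun ω => X ω + Y ω) P := hXm.add hYm
    have hint : ∀ u : ℝ, Integrable (fun ω => W ω * Real.exp (X ω + Y ω + u * Z ω)) P :=
      fun u => (stepII u).1
    have hval : ∀ u : ℝ, ∫ ω, W ω * Real.exp (X ω + Y ω + u * Z ω) ∂P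
        = (fun u : ℝ => ((cXW + cWY) + u * cWZ) * Real.exp ((cXX + 2*cXY + cYY)/2
            + (cZX + cYZ) * u + (cZZ/2) * u^2)) u := by
      intro u
      rw [(stepII u).2,
        show (cXX + 2*cXY + cYY + 2*u*(cZX + cYZ) + u^2*cZZ)/2
          = (cXX + 2*cXY + cYY)/2 + (cZX + cYZ) * u + (cZZ/2) * u^2 from by ring]
    obtain ⟨hi, hv⟩ := Statement17Aux.exp_family_integral_deriv (P := P)
      (h := W) (g := fun ω => X ω + Y ω) (T := Z) hWm hg hZm hint hval
      (Statement17Aux.hasDerivAt_linmul_exp_quadratic _ _ _ _ _)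
    constructor
    · refine hi.congr (Filter.Eventually.of_forall fun ω => ?_)
      show W ω * Z ω * Real.exp (X ω + Y ω + 0 * Z ω) = _
      rw [zero_mul, add_zero]
    · have e2 : ∫ ω, W ω * Z ω * Real.exp (X ω + Y ω + 0 * Z ω) ∂P
          = ∫ ω, W ω * Z ω * Real.exp (X ω + Y ω) ∂P :=
        integral_congr_ae (Filter.Eventually.of_forall fun ω => by simp only []; rw [zero_mul, add_zero])
      exact e2.symm.trans (hv.trans (by ring))
  -- simple exponential moments
  have iE : Integrable (fun ω => Real.exp (X ω + Y ω)) P := by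
    refine ((stepI 0 0).1).congr (Filter.Eventually.of_forall fun ω => ?_)
    simp only []
    congr 1; ring
  have hE : ∫ ω, Real.exp (X ω + Y ω) ∂P = Real.exp ((cXX + 2*cXY + cYY)/2) := by
    have e : ∫ ω, Real.exp (X ω + Y ω) ∂P
        = ∫ ω, Real.exp (X ω + Y ω + 0 * W ω + 0 * Z ω) ∂P :=
      integral_congr_ae (Filter.Eventually.of_forall fun ω => by simp only []; congr 1; ring)
    rw [e, (stepI 0 0).2]
    congr 1; ring
  have iWE : Integrable (fun ω => W ω * Real.exp (X ω + Y ω)) P := by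
    refine ((stepII 0).1).congr (Filter.Eventually.of_forall fun ω => ?_)
    simp only []
    congr 1; ring
  have hWE : ∫ ω, W ω * Real.exp (X ω + Y ω) ∂P
      = (cXW + cWY) * Real.exp ((cXX + 2*cXY + cYY)/2) := by
    have e : ∫ ω, W ω * Real.exp (X ω + Y ω) ∂P
        = ∫ ω, W ω * Real.exp (X ω + Y ω + 0 * Z ω) ∂P :=
      integral_congr_ae (Filter.Eventually.of_forall fun ω => by simp only []; congr 1; ring)
    rw [e, (stepII 0).2]
    rw [show (cXX + 2*cXY + cYY + 2*0*(cZX + cYZ) + (0:ℝ)^2*cZZ)/2 = (cXX + 2*cXY + cYY)/2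
      from by ring]
    ring
  -- ∫ Z e^{X+Y}
  have stepZ :
      Integrable (fun ω => Z ω * Real.exp (X ω + Y ω)) P ∧
      ∫ ω, Z ω * Real.exp (X ω + Y ω) ∂P
        = (cZX + cYZ) * Real.exp ((cXX + 2*cXY + cYY)/2) := by
    have hg : AEMeasurable (fun ω => X ω + Y ω) P := hXm.add hYm
    have hint : ∀ u : ℝ, Integrable (fun ω => (1:ℝ) * Real.exp (X ω + Y ω + u * Z ω)) P := by
      intro u
      refine ((stepI 0 u).1).congr (Filter.Eventually.of_forall fun ω => ?_)
      simp only []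
      rw [one_mul]; congr 1; ring
    have hval : ∀ u : ℝ, ∫ ω, (1:ℝ) * Real.exp (X ω + Y ω + u * Z ω) ∂P
        = (fun u : ℝ => Real.exp ((cXX + 2*cXY + cYY)/2
            + (cZX + cYZ) * u + (cZZ/2) * u^2)) u := by
      intro u
      have e : ∫ ω, (1:ℝ) * Real.exp (X ω + Y ω + u*Z ω) ∂P
          = ∫ ω, Real.exp (X ω + Y ω + 0*W ω + u*Z ω) ∂P :=
        integral_congr_ae (Filter.Eventually.of_forall fun ω => by
          simp only []; rw [one_mul]; congr 1; ring)
      rw [e, (stepI 0 u).2]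
      congr 1; ring
    obtain ⟨hi, hv⟩ := Statement17Aux.exp_family_integral_deriv (P := P)
      (h := fun _ => (1:ℝ)) (g := fun ω => X ω + Y ω) (T := Z)
      aemeasurable_const hg hZm hint hval
      (Statement17Aux.hasDerivAt_exp_quadratic _ _ _)
    constructor
    · refine hi.congr (Filter.Eventually.of_forall fun ω => ?_)
      show (1:ℝ) * Z ω * Real.exp (X ω + Y ω + 0 * Z ω) = _
      rw [one_mul, zero_mul, add_zero]
    · have e2 : ∫ ω, (1:ℝ) * Z ω * Real.exp (X ω + Y ω + 0 * Z ω) ∂P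
          = ∫ ω, Z ω * Real.exp (X ω + Y ω) ∂P :=
        integral_congr_ae (Filter.Eventually.of_forall fun ω => by
          simp only []; rw [one_mul, zero_mul, add_zero])
      exact e2.symm.trans (hv.trans (by ring))
  -- ∫ W e^X
  have stepWX : ∫ ω, W ω * Real.exp (X ω) ∂P = cXW * Real.exp (cXX/2) := by
    have hint : ∀ u : ℝ, Integrable (fun ω => (1:ℝ) * Real.exp (X ω + u * W ω)) P := by
      intro u
      refine ((key 1 0 u 0).1).congr (Filter.Eventually.of_forall fun ω => ?_)
      simp only []
      rw [one_mul]; congr 1; ring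
    have hval : ∀ u : ℝ, ∫ ω, (1:ℝ) * Real.exp (X ω + u * W ω) ∂P
        = (fun u : ℝ => Real.exp (cXX/2 + cXW * u + (cWW/2) * u^2)) u := by
      intro u
      have e : ∫ ω, (1:ℝ) * Real.exp (X ω + u*W ω) ∂P
          = ∫ ω, Real.exp (1*X ω + 0*Y ω + u*W ω + 0*Z ω) ∂P :=
        integral_congr_ae (Filter.Eventually.of_forall fun ω => by
          simp only []; rw [one_mul]; congr 1; ring)
      rw [e, (key 1 0 u 0).2]
      congr 1; ring
    obtain ⟨hi, hv⟩ := Statement17Aux.exp_family_integral_deriv (P := P)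
      (h := fun _ => (1:ℝ)) (g := X) (T := W)
      aemeasurable_const hXm hWm hint hval
      (Statement17Aux.hasDerivAt_exp_quadratic _ _ _)
    have e2 : ∫ ω, (1:ℝ) * W ω * Real.exp (X ω + 0 * W ω) ∂P
        = ∫ ω, W ω * Real.exp (X ω) ∂P :=
      integral_congr_ae (Filter.Eventually.of_forall fun ω => by
        simp only []; rw [one_mul, zero_mul, add_zero])
    exact e2.symm.trans (hv.trans (by ring))
  -- ∫ Z e^Y
  have stepZY : ∫ ω, Z ω * Real.exp (Y ω) ∂P = cYZ * Real.exp (cYY/2) := by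
    have hint : ∀ u : ℝ, Integrable (fun ω => (1:ℝ) * Real.exp (Y ω + u * Z ω)) P := by
      intro u
      refine ((key 0 1 0 u).1).congr (Filter.Eventually.of_forall fun ω => ?_)
      simp only []
      rw [one_mul]; congr 1; ring
    have hval : ∀ u : ℝ, ∫ ω, (1:ℝ) * Real.exp (Y ω + u * Z ω) ∂P
        = (fun u : ℝ => Real.exp (cYY/2 + cYZ * u + (cZZ/2) * u^2)) u := by
      intro u
      have e : ∫ ω, (1:ℝ) * Real.exp (Y ω + u*Z ω) ∂P
          = ∫ ω, Real.exp (0*X ω + 1*Y ω + 0*W ω + u*Z ω) ∂P :=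
        integral_congr_ae (Filter.Eventually.of_forall fun ω => by
          simp only []; rw [one_mul]; congr 1; ring)
      rw [e, (key 0 1 0 u).2]
      congr 1; ring
    obtain ⟨hi, hv⟩ := Statement17Aux.exp_family_integral_deriv (P := P)
      (h := fun _ => (1:ℝ)) (g := Y) (T := Z)
      aemeasurable_const hYm hZm hint hval
      (Statement17Aux.hasDerivAt_exp_quadratic _ _ _)
    have e2 : ∫ ω, (1:ℝ) * Z ω * Real.exp (Y ω + 0 * Z ω) ∂P
        = ∫ ω, Z ω * Real.exp (Y ω) ∂P :=
      integral_congr_ae (Filter.Eventually.of_forall fun ω => by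
        simp only []; rw [one_mul, zero_mul, add_zero])
    exact e2.symm.trans (hv.trans (by ring))
  -- reduce the inner integrals of the statement
  have hXsq : ∫ ω, (X ω) ^ 2 ∂P = cXX := by
    rw [hcXX]
    exact integral_congr_ae (Filter.Eventually.of_forall fun ω => by simp only []; rw [pow_two])
  have hYsq : ∫ ω, (Y ω) ^ 2 ∂P = cYY := by
    rw [hcYY]
    exact integral_congr_ae (Filter.Eventually.of_forall fun ω => by simp only []; rw [pow_two])
  have hIW : ∫ ω, W ω * Real.exp (X ω - cXX/2) ∂P = cXW := by
    have e : (fun ω => W ω * Real.exp (X ω - cXX/2))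
        = fun ω => (W ω * Real.exp (X ω)) * Real.exp (-(cXX/2)) := by
      funext ω
      rw [show X ω - cXX/2 = X ω + -(cXX/2) from by ring, Real.exp_add]
      ring
    rw [e, integral_mul_const, stepWX, mul_assoc, ← Real.exp_add]
    simp
  have hIZ : ∫ ω, Z ω * Real.exp (Y ω - cYY/2) ∂P = cYZ := by
    have e : (fun ω => Z ω * Real.exp (Y ω - cYY/2))
        = fun ω => (Z ω * Real.exp (Y ω)) * Real.exp (-(cYY/2)) := by
      funext ω
      rw [show Y ω - cYY/2 = Y ω + -(cYY/2) from by ring, Real.exp_add]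
      ring
    rw [e, integral_mul_const, stepZY, mul_assoc, ← Real.exp_add]
    simp
  rw [hXsq, hYsq, hIW, hIZ]
  -- expand the integrand
  have hexp : Real.exp ((cXX + 2*cXY + cYY)/2) * Real.exp (-((cXX + cYY)/2))
      = Real.exp cXY := by
    rw [← Real.exp_add]; congr 1; ring
  have e : (fun ω => (W ω - cXW) * (Z ω - cYZ) * Real.exp (X ω - cXX/2)
        * Real.exp (Y ω - cYY/2))
      = fun ω => ((W ω * Z ω * Real.exp (X ω + Y ω) + (cXW*cYZ) * Real.exp (X ω + Y ω))
          - (cYZ * (W ω * Real.exp (X ω + Y ω)) + cXW * (Z ω * Real.exp (X ω + Y ω))))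
          * Real.exp (-((cXX + cYY)/2)) := by
    funext ω
    have h12 : Real.exp (X ω - cXX/2) * Real.exp (Y ω - cYY/2)
        = Real.exp (X ω + Y ω) * Real.exp (-((cXX + cYY)/2)) := by
      rw [← Real.exp_add, ← Real.exp_add]; congr 1; ring
    calc (W ω - cXW) * (Z ω - cYZ) * Real.exp (X ω - cXX/2) * Real.exp (Y ω - cYY/2)
        = (W ω - cXW) * (Z ω - cYZ)
          * (Real.exp (X ω - cXX/2) * Real.exp (Y ω - cYY/2)) := by ring
      _ = (W ω - cXW) * (Z ω - cYZ)
          * (Real.exp (X ω + Y ω) * Real.exp (-((cXX + cYY)/2))) := by rw [h12]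
      _ = _ := by ring
  have i1' : Integrable (fun ω => cXW*cYZ * Real.exp (X ω + Y ω)) P := iE.const_mul _
  have i2' : Integrable (fun ω => cYZ * (W ω * Real.exp (X ω + Y ω))) P := iWE.const_mul _
  have i3' : Integrable (fun ω => cXW * (Z ω * Real.exp (X ω + Y ω))) P := stepZ.1.const_mul _
  have iA : Integrable (fun ω => W ω * Z ω * Real.exp (X ω + Y ω)
      + cXW*cYZ * Real.exp (X ω + Y ω)) P := stepIII.1.add i1'
  have iB : Integrable (fun ω => cYZ * (W ω * Real.exp (X ω + Y ω))
      + cXW * (Z ω * Real.exp (X ω + Y ω))) P := i2'.add i3'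
  rw [e, integral_mul_const, integral_sub iA iB,
    integral_add stepIII.1 i1', integral_add i2' i3',
    integral_const_mul, integral_const_mul, integral_const_mul,
    stepIII.2, hE, hWE, stepZ.2]
  linear_combination (cWY * cZX + cWZ) * hexp
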